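/- Let A_V := {W ∈ ℝ^{3s} : R(W_1, W_2, W_3, W) = 0 for all W_1, W_2, W_3} and A_{T,V} := A_V^⊥ with respect to g. Let T : (ℝ^{3s})^5 → ℝ be any 5-linear map that vanishes whenever at least one of its five arguments lies in A_{T,V}. Then for any two normalized bases B = {U_i, T_i, V_i} and B̃ = {Ũ_i, T̃_i, Ṽ_i} of ℝ^{3s}, one has Σ_{i_1, …, i_5 = 1}^{s} T(U_{i_1}, U_{i_2}, U_{i_3}, U_{i_4}, U_{i_5})² = Σ_{i_1, …, i_5 = 1}^{s} T(Ũ_{i_1}, Ũ_{i_2}, Ũ_{i_3}, Ũ_{i_4}, Ũ_{i_5})². -/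
import Mathlib


open scoped BigOperators

noncomputable section

/-- Index type for `ℝ^{3s}`: the first block indexes `U_1,…,U_s`, the second block
`T_1,…,T_s`, the third block `V_1,…,V_s`. -/
abbrev Ix (s : ℕ) := Fin s ⊕ Fin s ⊕ Fin s

/-- The vector space `ℝ^{3s}`. -/
abbrev Vc (s : ℕ) := Ix s → ℝ

def uI {s : ℕ} (i : Fin s) : Ix s := Sum.inl i
def tI {s : ℕ} (i : Fin s) : Ix s := Sum.inr (Sum.inl i)
def vI {s : ℕ} (i : Fin s) : Ix s := Sum.inr (Sum.inr i)

/-- The standard basis vector `U_i`. -/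
def Uv {s : ℕ} (i : Fin s) : Vc s := Pi.single (uI i) 1
/-- The standard basis vector `T_i`. -/
def Tv {s : ℕ} (i : Fin s) : Vc s := Pi.single (tI i) 1
/-- The standard basis vector `V_i`. -/
def Vv {s : ℕ} (i : Fin s) : Vc s := Pi.single (vI i) 1

/-- The symmetric bilinear form `g` on `ℝ^{3s}` whose only nonzero values on the
standard basis vectors are `g(U_i,V_i) = g(V_i,U_i) = 1` and `g(T_i,T_i) = -1`. -/
def gM (s : ℕ) (x y : Vc s) : ℝ :=
  ∑ i, (x (uI i) * y (vI i) + x (vI i) * y (uI i) - x (tI i) * y (tI i))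

/-- The 4-linear form `R` on `ℝ^{3s}` determined by the `ℤ₂`-symmetries
`R(x,y,z,w) = R(z,w,x,y) = -R(y,x,z,w)` and whose nonzero values on the standard
basis vectors, up to those symmetries, are `R(U_i,U_j,U_j,T_i) = 1` for `i ≠ j`.
(The eight summands below are precisely the full `ℤ₂`-orbit of the generating
components; the summands cancel in pairs when `i = j`.) -/
def RM (s : ℕ) (x y z w : Vc s) : ℝ :=
  ∑ i, ∑ j,
    (x (uI i) * y (uI j) * z (uI j) * w (tI i)
     - x (uI j) * y (uI i) * z (uI j) * w (tI i)
     - x (uI i) * y (uI j) * z (tI i) * w (uI j)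
     + x (uI j) * y (uI i) * z (tI i) * w (uI j)
     + x (uI j) * y (tI i) * z (uI i) * w (uI j)
     - x (tI i) * y (uI j) * z (uI i) * w (uI j)
     - x (uI j) * y (tI i) * z (uI j) * w (uI i)
     + x (tI i) * y (uI j) * z (uI j) * w (uI i))

/-- `Z_i^+ = U_i + (1/2) V_i`. -/
def Zp {s : ℕ} (i : Fin s) : Vc s := Uv i + (2⁻¹ : ℝ) • Vv i
/-- `Z_i^- = U_i - (1/2) V_i`. -/
def Zm {s : ℕ} (i : Fin s) : Vc s := Uv i - (2⁻¹ : ℝ) • Vv i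

/-- The standard basis vector of `ℝ^{3s}` with index `a`. -/
def stdb {s : ℕ} (a : Ix s) : Vc s := Pi.single a 1

/-- A family `b` indexed by `Ix s` (to be thought of as
`Ũ_1,…,Ũ_s,T̃_1,…,T̃_s,Ṽ_1,…,Ṽ_s`) is *normalized* if it is a basis on which `g` and
`R` take exactly the same values as on the standard basis `U_i, T_i, V_i`; i.e. the
only nonzero values of `g` are `g(Ũ_i,Ṽ_i) = g(Ṽ_i,Ũ_i) = 1`, `g(T̃_i,T̃_i) = -1` and
the only nonzero values of `R`, up to its `ℤ₂`-symmetries, are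
`R(Ũ_i,Ũ_j,Ũ_j,T̃_i) = 1` for `i ≠ j`. -/
def IsNormalizedBasis (s : ℕ) (b : Ix s → Vc s) : Prop :=
  LinearIndependent ℝ b ∧ Submodule.span ℝ (Set.range b) = ⊤ ∧
  (∀ a a' : Ix s, gM s (b a) (b a') = gM s (stdb a) (stdb a')) ∧
  (∀ a₁ a₂ a₃ a₄ : Ix s,
    RM s (b a₁) (b a₂) (b a₃) (b a₄) = RM s (stdb a₁) (stdb a₂) (stdb a₃) (stdb a₄))

/-- `A_V = {W : R(W₁,W₂,W₃,W) = 0 for all W₁,W₂,W₃}`. -/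
def AVset (s : ℕ) : Set (Vc s) := {W | ∀ W₁ W₂ W₃ : Vc s, RM s W₁ W₂ W₃ W = 0}

/-- `A_{T,V} = A_V^⊥ = {W : g(W,W₁) = 0 for all W₁ ∈ A_V}`. -/
def ATVset (s : ℕ) : Set (Vc s) := {W | ∀ W₁ ∈ AVset s, gM s W W₁ = 0}

section Aux
variable {s : ℕ}

/-- Euclidean pairing of the `U`-components. -/
def phi (s : ℕ) (x y : Vc s) : ℝ := ∑ k, x (uI k) * y (uI k)

/-- Pairing of `U`-components with `T`-components. -/
def psi (s : ℕ) (x y : Vc s) : ℝ := ∑ k, (x (uI k) * y (tI k) + x (tI k) * y (uI k))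

lemma RM_formula (x y z w : Vc s) :
    RM s x y z w = phi s y z * psi s x w - phi s x z * psi s y w
      - phi s y w * psi s x z + phi s x w * psi s y z := by
  unfold RM phi psi
  simp only [Finset.sum_mul, Finset.mul_sum, ← Finset.sum_sub_distrib, ← Finset.sum_add_distrib]
  exact Finset.sum_congr rfl fun j _ => Finset.sum_congr rfl fun i _ => by ring

@[simp] lemma Uv_apply_u (i j : Fin s) : Uv i (uI j) = if i = j then 1 else 0 := by
  simp [Uv, uI, Pi.single_apply, eq_comm]
@[simp] lemma Uv_apply_t (i j : Fin s) : Uv i (tI j) = 0 := by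
  simp [Uv, uI, tI, Pi.single_apply]
@[simp] lemma Uv_apply_v (i j : Fin s) : Uv i (vI j) = 0 := by
  simp [Uv, uI, vI, Pi.single_apply]
@[simp] lemma Tv_apply_u (i j : Fin s) : Tv i (uI j) = 0 := by
  simp [Tv, uI, tI, Pi.single_apply]
@[simp] lemma Tv_apply_t (i j : Fin s) : Tv i (tI j) = if i = j then 1 else 0 := by
  simp [Tv, tI, Pi.single_apply, eq_comm]
@[simp] lemma Tv_apply_v (i j : Fin s) : Tv i (vI j) = 0 := by
  simp [Tv, tI, vI, Pi.single_apply]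
@[simp] lemma Vv_apply_u (i j : Fin s) : Vv i (uI j) = 0 := by
  simp [Vv, uI, vI, Pi.single_apply]
@[simp] lemma Vv_apply_t (i j : Fin s) : Vv i (tI j) = 0 := by
  simp [Vv, tI, vI, Pi.single_apply]
@[simp] lemma Vv_apply_v (i j : Fin s) : Vv i (vI j) = if i = j then 1 else 0 := by
  simp [Vv, vI, Pi.single_apply, eq_comm]

@[simp] lemma phi_Uv_left (i : Fin s) (y : Vc s) : phi s (Uv i) y = y (uI i) := by
  simp [phi, ite_mul]
@[simp] lemma phi_Tv_left (i : Fin s) (y : Vc s) : phi s (Tv i) y = 0 := by simp [phi]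
@[simp] lemma phi_Vv_left (i : Fin s) (y : Vc s) : phi s (Vv i) y = 0 := by simp [phi]
@[simp] lemma psi_Uv_left (i : Fin s) (y : Vc s) : psi s (Uv i) y = y (tI i) := by
  simp [psi, ite_mul]
@[simp] lemma psi_Tv_left (i : Fin s) (y : Vc s) : psi s (Tv i) y = y (uI i) := by
  simp [psi, ite_mul]
@[simp] lemma psi_Vv_left (i : Fin s) (y : Vc s) : psi s (Vv i) y = 0 := by simp [psi]

lemma phi_comm (x y : Vc s) : phi s x y = phi s y x := by
  unfold phi; exact Finset.sum_congr rfl fun k _ => by ring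
lemma psi_comm (x y : Vc s) : psi s x y = psi s y x := by
  unfold psi; exact Finset.sum_congr rfl fun k _ => by ring

@[simp] lemma phi_Uv_right (i : Fin s) (y : Vc s) : phi s y (Uv i) = y (uI i) := by
  rw [phi_comm]; simp
@[simp] lemma phi_Tv_right (i : Fin s) (y : Vc s) : phi s y (Tv i) = 0 := by
  rw [phi_comm]; simp
@[simp] lemma phi_Vv_right (i : Fin s) (y : Vc s) : phi s y (Vv i) = 0 := by
  rw [phi_comm]; simp
@[simp] lemma psi_Uv_right (i : Fin s) (y : Vc s) : psi s y (Uv i) = y (tI i) := by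
  rw [psi_comm]; simp
@[simp] lemma psi_Tv_right (i : Fin s) (y : Vc s) : psi s y (Tv i) = y (uI i) := by
  rw [psi_comm]; simp
@[simp] lemma psi_Vv_right (i : Fin s) (y : Vc s) : psi s y (Vv i) = 0 := by
  rw [psi_comm]; simp

lemma RM_Vv₂ (x z w : Vc s) (i : Fin s) : RM s x (Vv i) z w = 0 := by
  rw [RM_formula]; simp

lemma RM_Tv₂ (x z w : Vc s) (i : Fin s) :
    RM s x (Tv i) z w = phi s x w * z (uI i) - phi s x z * w (uI i) := by
  rw [RM_formula]; simp; ring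

end Aux
section Aux2
variable {s : ℕ}

lemma gM_symm (x y : Vc s) : gM s x y = gM s y x := by
  unfold gM; exact Finset.sum_congr rfl fun k _ => by ring

@[simp] lemma gM_Uv_right (y : Vc s) (i : Fin s) : gM s y (Uv i) = y (vI i) := by
  simp [gM, ite_mul, mul_ite]
@[simp] lemma gM_Tv_right (y : Vc s) (i : Fin s) : gM s y (Tv i) = - y (tI i) := by
  simp [gM, ite_mul, mul_ite]
@[simp] lemma gM_Vv_right (y : Vc s) (i : Fin s) : gM s y (Vv i) = y (uI i) := by
  simp [gM, ite_mul, mul_ite]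

@[simp] lemma stdb_uI (i : Fin s) : stdb (uI i) = Uv i := rfl
@[simp] lemma stdb_tI (i : Fin s) : stdb (tI i) = Tv i := rfl
@[simp] lemma stdb_vI (i : Fin s) : stdb (vI i) = Vv i := rfl

/-- Reconstruction of a vector from the standard basis via `g`. -/
lemma std_reconstruct (y : Vc s) :
    y = ∑ j, (gM s y (Vv j) • Uv j + gM s y (Uv j) • Vv j + (- gM s y (Tv j)) • Tv j) := by
  have key : ∀ a : Ix s,
      y a = ∑ j, (y (uI j) * Uv j a + y (vI j) * Vv j a + y (tI j) * Tv j a) := by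
    rintro (i | i | i)
    · show y (uI i) = ∑ j, (y (uI j) * Uv j (uI i) + y (vI j) * Vv j (uI i) + y (tI j) * Tv j (uI i))
      simp [mul_ite]
    · show y (tI i) = ∑ j, (y (uI j) * Uv j (tI i) + y (vI j) * Vv j (tI i) + y (tI j) * Tv j (tI i))
      simp [mul_ite]
    · show y (vI i) = ∑ j, (y (uI j) * Uv j (vI i) + y (vI j) * Vv j (vI i) + y (tI j) * Tv j (vI i))
      simp [mul_ite]
  funext a
  rw [Finset.sum_apply]
  rw [key a]
  exact Finset.sum_congr rfl fun j _ => by simp [smul_eq_mul]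

end Aux2
section Aux3
variable {s : ℕ}

@[simp] lemma gM_Uv_left (y : Vc s) (i : Fin s) : gM s (Uv i) y = y (vI i) := by
  rw [gM_symm]; simp
@[simp] lemma gM_Tv_left (y : Vc s) (i : Fin s) : gM s (Tv i) y = - y (tI i) := by
  rw [gM_symm]; simp
@[simp] lemma gM_Vv_left (y : Vc s) (i : Fin s) : gM s (Vv i) y = y (uI i) := by
  rw [gM_symm]; simp

lemma phi_combo (c d e : Fin s → ℝ) (p q r : Fin s → Vc s) (z : Vc s) :
    phi s (∑ j, (c j • p j + d j • q j + e j • r j)) z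
      = ∑ j, (c j * phi s (p j) z + d j * phi s (q j) z + e j * phi s (r j) z) := by
  unfold phi
  simp only [Finset.sum_apply, Pi.add_apply, Pi.smul_apply, smul_eq_mul, Finset.sum_mul,
    Finset.mul_sum, ← Finset.sum_add_distrib]
  rw [Finset.sum_comm]
  exact Finset.sum_congr rfl fun j _ => Finset.sum_congr rfl fun k _ => by ring

lemma psi_combo (c d e : Fin s → ℝ) (p q r : Fin s → Vc s) (z : Vc s) :
    psi s (∑ j, (c j • p j + d j • q j + e j • r j)) z
      = ∑ j, (c j * psi s (p j) z + d j * psi s (q j) z + e j * psi s (r j) z) := by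
  unfold psi
  simp only [Finset.sum_apply, Pi.add_apply, Pi.smul_apply, smul_eq_mul, Finset.sum_mul,
    Finset.mul_sum, add_mul, ← Finset.sum_add_distrib]
  rw [Finset.sum_comm]
  exact Finset.sum_congr rfl fun j _ => Finset.sum_congr rfl fun k _ => by ring

lemma RM_combo (x z w : Vc s) (c d e : Fin s → ℝ) (p q r : Fin s → Vc s) :
    RM s x (∑ j, (c j • p j + d j • q j + e j • r j)) z w
      = ∑ j, (c j * RM s x (p j) z w + d j * RM s x (q j) z w + e j * RM s x (r j) z w) := by
  rw [RM_formula, phi_combo, psi_combo, phi_combo, psi_combo]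
  simp only [RM_formula, Finset.sum_mul, Finset.mul_sum, ← Finset.sum_add_distrib,
    ← Finset.sum_sub_distrib]
  exact Finset.sum_congr rfl fun j _ => by ring

lemma gM_add_left (x x' y : Vc s) : gM s (x + x') y = gM s x y + gM s x' y := by
  unfold gM
  rw [← Finset.sum_add_distrib]
  exact Finset.sum_congr rfl fun k _ => by simp [Pi.add_apply]; ring

lemma gM_smul_left (a : ℝ) (x y : Vc s) : gM s (a • x) y = a * gM s x y := by
  unfold gM
  rw [Finset.mul_sum]
  exact Finset.sum_congr rfl fun k _ => by simp [Pi.smul_apply, smul_eq_mul]; ring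

lemma gM_zero_left (y : Vc s) : gM s (0 : Vc s) y = 0 := by simp [gM]

/-- Reconstruction of a vector from a normalized basis via `g`. -/
lemma tilde_reconstruct {b : Ix s → Vc s} (hb : IsNormalizedBasis s b) (y : Vc s) :
    y = ∑ i, (gM s y (b (vI i)) • b (uI i) + gM s y (b (uI i)) • b (vI i)
        + (- gM s y (b (tI i))) • b (tI i)) := by
  obtain ⟨-, hspan, hg, -⟩ := hb
  have hy : y ∈ Submodule.span ℝ (Set.range b) := hspan ▸ Submodule.mem_top
  induction hy using Submodule.span_induction with
  | mem x hx =>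
    obtain ⟨a, rfl⟩ := hx
    have h1 : ∀ i, gM s (b a) (b (vI i)) = stdb a (uI i) := fun i => by
      rw [hg a (vI i), gM_symm]; simp [gM_symm]
    have h2 : ∀ i, gM s (b a) (b (uI i)) = stdb a (vI i) := fun i => by
      rw [hg a (uI i), gM_symm]; simp
    have h3 : ∀ i, gM s (b a) (b (tI i)) = - stdb a (tI i) := fun i => by
      rw [hg a (tI i), gM_symm]; simp
    simp only [h1, h2, h3, neg_neg]
    rcases a with k | k | k
    · simp [stdb, uI, tI, vI, Pi.single_apply]
    · simp [stdb, uI, tI, vI, Pi.single_apply]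
    · simp [stdb, uI, tI, vI, Pi.single_apply]
  | zero => simp [gM_zero_left]
  | add x x' hx hx' ihx ihx' =>
    conv_lhs => rw [ihx, ihx']
    rw [← Finset.sum_add_distrib]
    exact Finset.sum_congr rfl fun i _ => by rw [gM_add_left, gM_add_left, gM_add_left]; module
  | smul a x hx ihx =>
    conv_lhs => rw [ihx]
    rw [Finset.smul_sum]
    exact Finset.sum_congr rfl fun i _ => by rw [gM_smul_left, gM_smul_left, gM_smul_left]; module

end Aux3
section Aux4
variable {s : ℕ}

/-- Invariance of the `g`-trace contraction of `R ⊗ R` under change of normalized basis. -/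
lemma contraction {b : Ix s → Vc s} (hb : IsNormalizedBasis s b) (x z w x' z' w' : Vc s) :
    ∑ i, (RM s x (b (uI i)) z w * RM s x' (b (vI i)) z' w'
        + RM s x (b (vI i)) z w * RM s x' (b (uI i)) z' w'
        - RM s x (b (tI i)) z w * RM s x' (b (tI i)) z' w')
    = ∑ j, (RM s x (Uv j) z w * RM s x' (Vv j) z' w'
        + RM s x (Vv j) z w * RM s x' (Uv j) z' w'
        - RM s x (Tv j) z w * RM s x' (Tv j) z' w') := by
  have hbeta : ∀ a : Ix s, RM s x' (b a) z' w'
      = ∑ j, (gM s (b a) (Vv j) * RM s x' (Uv j) z' w'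
          + gM s (b a) (Uv j) * RM s x' (Vv j) z' w'
          + (- gM s (b a) (Tv j)) * RM s x' (Tv j) z' w') := by
    intro a
    conv_lhs => rw [std_reconstruct (b a)]
    exact RM_combo x' z' w' _ _ _ _ _ _
  have halpha : ∀ v : Vc s, RM s x v z w
      = ∑ i, (gM s v (b (vI i)) * RM s x (b (uI i)) z w
          + gM s v (b (uI i)) * RM s x (b (vI i)) z w
          + (- gM s v (b (tI i))) * RM s x (b (tI i)) z w) := by
    intro v
    conv_lhs => rw [tilde_reconstruct hb v]
    exact RM_combo x z w _ _ _ _ _ _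
  have halphaU : ∀ j : Fin s, RM s x (Uv j) z w
      = ∑ i, (gM s (Uv j) (b (vI i)) * RM s x (b (uI i)) z w
          + gM s (Uv j) (b (uI i)) * RM s x (b (vI i)) z w
          + (- gM s (Uv j) (b (tI i))) * RM s x (b (tI i)) z w) := fun j => halpha (Uv j)
  have halphaV : ∀ j : Fin s, RM s x (Vv j) z w
      = ∑ i, (gM s (Vv j) (b (vI i)) * RM s x (b (uI i)) z w
          + gM s (Vv j) (b (uI i)) * RM s x (b (vI i)) z w
          + (- gM s (Vv j) (b (tI i))) * RM s x (b (tI i)) z w) := fun j => halpha (Vv j)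
  have halphaT : ∀ j : Fin s, RM s x (Tv j) z w
      = ∑ i, (gM s (Tv j) (b (vI i)) * RM s x (b (uI i)) z w
          + gM s (Tv j) (b (uI i)) * RM s x (b (vI i)) z w
          + (- gM s (Tv j) (b (tI i))) * RM s x (b (tI i)) z w) := fun j => halpha (Tv j)
  clear halpha
  simp only [hbeta, halphaU, halphaV, halphaT]
  simp only [Finset.mul_sum, Finset.sum_mul, ← Finset.sum_add_distrib, ← Finset.sum_sub_distrib]
  rw [Finset.sum_comm]
  exact Finset.sum_congr rfl fun j _ => Finset.sum_congr rfl fun i _ => by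
    simp only [gM_Uv_left, gM_Uv_right, gM_Tv_left, gM_Tv_right, gM_Vv_left, gM_Vv_right]
    ring

end Aux4
section Aux5
variable {s : ℕ}

lemma RM_UUUU (a b c d : Fin s) : RM s (Uv a) (Uv b) (Uv c) (Uv d) = 0 := by
  rw [RM_formula]; simp

lemma sum_expand (p q p' q' : ℝ) (A C A' C' : Vc s) :
    ∑ j : Fin s, ((p * A (uI j) - q * C (uI j)) * (p' * A' (uI j) - q' * C' (uI j)))
    = p * p' * phi s A A' - p * q' * phi s A C' - q * p' * phi s C A' + q * q' * phi s C C' := by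
  unfold phi
  simp only [Finset.mul_sum, ← Finset.sum_sub_distrib, ← Finset.sum_add_distrib]
  exact Finset.sum_congr rfl fun j _ => by ring

lemma master {b : Ix s → Vc s} (hb : IsNormalizedBasis s b) (a c a' c' : Fin s) :
    phi s (Uv a) (Uv c) * phi s (Uv a') (Uv c') * phi s (Uv a) (Uv a')
      - phi s (Uv a) (Uv c) * phi s (Uv a') (Uv a') * phi s (Uv a) (Uv c')
      - phi s (Uv a) (Uv a) * phi s (Uv a') (Uv c') * phi s (Uv c) (Uv a')
      + phi s (Uv a) (Uv a) * phi s (Uv a') (Uv a') * phi s (Uv c) (Uv c')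
    = phi s (b (uI a)) (b (uI c)) * phi s (b (uI a')) (b (uI c')) * phi s (b (uI a)) (b (uI a'))
      - phi s (b (uI a)) (b (uI c)) * phi s (b (uI a')) (b (uI a')) * phi s (b (uI a)) (b (uI c'))
      - phi s (b (uI a)) (b (uI a)) * phi s (b (uI a')) (b (uI c')) * phi s (b (uI c)) (b (uI a'))
      + phi s (b (uI a)) (b (uI a)) * phi s (b (uI a')) (b (uI a')) * phi s (b (uI c)) (b (uI c')) := by
  have hR := hb.2.2.2
  have h := contraction hb (b (uI a)) (b (uI a)) (b (uI c)) (b (uI a')) (b (uI a')) (b (uI c'))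
  simp only [hR, stdb_uI, stdb_tI, stdb_vI] at h
  simp only [RM_UUUU, RM_Vv₂, RM_Tv₂, zero_mul, mul_zero, zero_add, zero_sub, add_zero,
    neg_mul, mul_neg, neg_neg, Finset.sum_neg_distrib, neg_inj] at h
  rw [sum_expand, sum_expand] at h
  exact h

lemma key_eqs (hs : 2 ≤ s) {b : Ix s → Vc s} (hb : IsNormalizedBasis s b) {a c : Fin s}
    (hac : a ≠ c) :
    phi s (b (uI a)) (b (uI a)) = 1 ∧ phi s (b (uI a)) (b (uI c)) = 0 := by
  have hA := master hb a c a c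
  have hA' := master hb c a c a
  have hB := master hb a c c a
  have hs1 : phi s (b (uI c)) (b (uI a)) = phi s (b (uI a)) (b (uI c)) := phi_comm _ _
  rw [hs1] at hA hA' hB
  simp only [phi_Uv_left, Uv_apply_u, if_neg hac, if_neg (Ne.symm hac), if_pos rfl, if_true, eq_self_iff_true,
    zero_mul, mul_zero, one_mul, mul_one, zero_sub, sub_zero, zero_add, add_zero,
    neg_mul, mul_neg, neg_neg, neg_zero] at hA hA' hB
  -- abbreviate
  set u := phi s (b (uI a)) (b (uI a)) with hu
  set v := phi s (b (uI c)) (b (uI c)) with hv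
  set w := phi s (b (uI a)) (b (uI c)) with hw
  have e1 : u * (u * v - w * w) = 1 := by linear_combination -hA
  have e2 : v * (u * v - w * w) = 1 := by linear_combination -hA'
  have e3 : w * (w * w - u * v) = 0 := by linear_combination -hB
  have hm : (u * v - w * w) ≠ 0 := fun h0 => by
    rw [h0, mul_zero] at e1; exact one_ne_zero e1.symm
  have hw0 : w = 0 := by
    rcases mul_eq_zero.1 e3 with h | h
    · exact h
    · exact absurd (by linarith : u * v - w * w = 0) hm
  refine ⟨?_, hw0⟩
  rw [hw0] at e1 e2
  simp only [mul_zero, sub_zero] at e1 e2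
  have h4 : u * v ≠ 0 := fun h0 => by
    rw [h0, mul_zero] at e1; exact one_ne_zero e1.symm
  have hne : u = v := by
    have h3 : u * v * (u - v) = 0 := by linear_combination e1 - e2
    rcases mul_eq_zero.1 h3 with h | h
    · exact absurd h h4
    · linarith
  have hcube : u * (u * u) = 1 := by rw [← hne] at e1; exact e1
  nlinarith [hcube, sq_nonneg (u - 1), sq_nonneg (u + 1)]

lemma orth (hs : 2 ≤ s) {b : Ix s → Vc s} (hb : IsNormalizedBasis s b) (a c : Fin s) :
    phi s (b (uI a)) (b (uI c)) = if a = c then 1 else 0 := by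
  rcases eq_or_ne a c with rfl | hac
  · have exists_ne : ∃ c' : Fin s, a ≠ c' := by
      rcases eq_or_ne a ⟨0, by omega⟩ with h | h
      · exact ⟨⟨1, by omega⟩, by simp [h, Fin.ext_iff]⟩
      · exact ⟨⟨0, by omega⟩, h⟩
    obtain ⟨c', hc'⟩ := exists_ne
    simp only [if_pos rfl]
    exact (key_eqs hs hb hc').1
  · simp only [if_neg hac]
    exact (key_eqs hs hb hac).2

end Aux5
section Aux6
variable {s : ℕ}

lemma exists_ne_fin (hs : 2 ≤ s) (i : Fin s) : ∃ j : Fin s, j ≠ i := by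
  rcases eq_or_ne i ⟨0, by omega⟩ with h | h
  · exact ⟨⟨1, by omega⟩, by simp [h, Fin.ext_iff]⟩
  · exact ⟨⟨0, by omega⟩, fun hh => h (hh ▸ rfl)⟩

lemma mem_ATV (hs : 2 ≤ s) {W : Vc s} (h : ∀ k, W (uI k) = 0) : W ∈ ATVset s := by
  intro W₁ hW₁
  have ht : ∀ i : Fin s, W₁ (tI i) = 0 := by
    intro i
    obtain ⟨j, hj⟩ := exists_ne_fin hs i
    have h0 := hW₁ (Uv i) (Uv j) (Uv j)
    rw [RM_formula] at h0
    simpa [if_neg (Ne.symm hj), hj] using h0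
  have hu : ∀ j : Fin s, W₁ (uI j) = 0 := by
    intro j
    obtain ⟨i, hi⟩ := exists_ne_fin hs j
    have h0 := hW₁ (Uv i) (Uv j) (Tv i)
    rw [RM_formula] at h0
    simpa [if_neg hi, if_neg (Ne.symm hi)] using h0
  simp [gM, h, hu, ht]

lemma sum_succ_fun {n : ℕ} (F : (Fin (n + 1) → Fin s) → ℝ) :
    ∑ g : Fin (n + 1) → Fin s, F g = ∑ i : Fin s, ∑ g : Fin n → Fin s, F (Fin.cons i g) := by
  rw [← Equiv.sum_comp (Fin.consEquiv fun _ => Fin s) F, Fintype.sum_prod_type]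
  rfl

lemma sum_five (F : (Fin 5 → Fin s) → ℝ) :
    ∑ g : Fin 5 → Fin s, F g
      = ∑ i₁ : Fin s, ∑ i₂ : Fin s, ∑ i₃ : Fin s, ∑ i₄ : Fin s, ∑ i₅ : Fin s,
          F ![i₁, i₂, i₃, i₄, i₅] := by
  rw [sum_succ_fun]
  refine Finset.sum_congr rfl fun i₁ _ => ?_
  rw [sum_succ_fun]
  refine Finset.sum_congr rfl fun i₂ _ => ?_
  rw [sum_succ_fun]
  refine Finset.sum_congr rfl fun i₃ _ => ?_
  rw [sum_succ_fun]
  refine Finset.sum_congr rfl fun i₄ _ => ?_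
  rw [sum_succ_fun]
  refine Finset.sum_congr rfl fun i₅ _ => ?_
  exact Fintype.sum_subsingleton _ ![]

open Matrix in
lemma col_orth (hs : 2 ≤ s) {b : Ix s → Vc s} (hb : IsNormalizedBasis s b) (j j' : Fin s) :
    ∑ i : Fin s, b (uI i) (uI j) * b (uI i) (uI j') = if j = j' then 1 else 0 := by
  classical
  let C : Matrix (Fin s) (Fin s) ℝ := Matrix.of fun i j => b (uI i) (uI j)
  have h1 : C * Cᵀ = 1 := by
    ext a c
    rw [Matrix.mul_apply]
    have : ∑ k, C a k * Cᵀ k c = phi s (b (uI a)) (b (uI c)) := by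
      exact Finset.sum_congr rfl fun k _ => rfl
    rw [this, orth hs hb, Matrix.one_apply]
  have h2 : Cᵀ * C = 1 := mul_eq_one_comm.mp h1
  have := congrFun (congrFun h2 j) j'
  rw [Matrix.mul_apply, Matrix.one_apply] at this
  rw [← this]
  exact Finset.sum_congr rfl fun i _ => rfl

end Aux6
section Aux7
variable {s : ℕ}

lemma expand_T (hs : 2 ≤ s) (T : MultilinearMap ℝ (fun _ : Fin 5 => Vc s) ℝ)
    (hT : ∀ x : Fin 5 → Vc s, (∃ i, x i ∈ ATVset s) → T x = 0)
    (b : Ix s → Vc s) (g : Fin 5 → Fin s) :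
    (T fun k => b (uI (g k)))
      = ∑ h : Fin 5 → Fin s,
          (∏ k, b (uI (g k)) (uI (h k))) * (T fun k => Uv (h k)) := by
  classical
  set A : Fin 5 → Vc s := fun k => ∑ j, b (uI (g k)) (uI j) • Uv j with hA
  set B : Fin 5 → Vc s := fun k => b (uI (g k)) - A k with hB
  have hdecomp : (fun k => b (uI (g k))) = A + B := by
    funext k; simp [hB]
  have hBmem : ∀ k, B k ∈ ATVset s := by
    intro k
    refine mem_ATV hs fun m => ?_
    simp [hB, hA, Finset.sum_apply, Pi.smul_apply, smul_eq_mul, mul_ite,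
      Finset.sum_ite_eq', Pi.sub_apply]
  rw [hdecomp, MultilinearMap.map_add_univ]
  rw [Finset.sum_eq_single_of_mem Finset.univ (Finset.mem_univ _) ?side]
  · rw [Finset.piecewise_univ]
    rw [hA, T.map_sum]
    refine Finset.sum_congr rfl fun h _ => ?_
    rw [T.map_smul_univ]
    simp [smul_eq_mul]
  case side =>
    intro S _ hS
    have hnall : ¬ ∀ k, k ∈ S := fun hall => hS (Finset.eq_univ_iff_forall.mpr hall)
    push_neg at hnall
    obtain ⟨k, hk⟩ := hnall
    refine hT _ ⟨k, ?_⟩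
    rw [Finset.piecewise_eq_of_notMem _ _ _ hk]
    exact hBmem k

lemma key_sum (hs : 2 ≤ s) (T : MultilinearMap ℝ (fun _ : Fin 5 => Vc s) ℝ)
    (hT : ∀ x : Fin 5 → Vc s, (∃ i, x i ∈ ATVset s) → T x = 0)
    {b : Ix s → Vc s} (hb : IsNormalizedBasis s b) :
    ∑ g : Fin 5 → Fin s, (T fun k => b (uI (g k))) ^ 2
      = ∑ h : Fin 5 → Fin s, (T fun k => Uv (h k)) ^ 2 := by
  classical
  calc ∑ g : Fin 5 → Fin s, (T fun k => b (uI (g k))) ^ 2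
      = ∑ g : Fin 5 → Fin s, ∑ h : Fin 5 → Fin s, ∑ h' : Fin 5 → Fin s,
          ((∏ k, b (uI (g k)) (uI (h k))) * (T fun k => Uv (h k)))
          * ((∏ k, b (uI (g k)) (uI (h' k))) * (T fun k => Uv (h' k))) := by
        refine Finset.sum_congr rfl fun g _ => ?_
        rw [expand_T hs T hT b g, sq, Finset.sum_mul_sum]
    _ = ∑ h : Fin 5 → Fin s, ∑ h' : Fin 5 → Fin s,
          ((T fun k => Uv (h k)) * (T fun k => Uv (h' k)))
          * ∑ g : Fin 5 → Fin s, ∏ k, (b (uI (g k)) (uI (h k)) * b (uI (g k)) (uI (h' k))) := by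
        rw [Finset.sum_comm]
        refine Finset.sum_congr rfl fun h _ => ?_
        rw [Finset.sum_comm]
        refine Finset.sum_congr rfl fun h' _ => ?_
        rw [Finset.mul_sum]
        refine Finset.sum_congr rfl fun g _ => ?_
        rw [Finset.prod_mul_distrib]
        ring
    _ = ∑ h : Fin 5 → Fin s, ∑ h' : Fin 5 → Fin s,
          ((T fun k => Uv (h k)) * (T fun k => Uv (h' k)))
          * (if h = h' then 1 else 0) := by
        refine Finset.sum_congr rfl fun h _ => Finset.sum_congr rfl fun h' _ => ?_
        congr 1
        rw [← Fintype.piFinset_univ,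
          Finset.sum_prod_piFinset Finset.univ
            (fun k i => b (uI i) (uI (h k)) * b (uI i) (uI (h' k)))]
        have hfac : ∀ k : Fin 5, (∑ i : Fin s, b (uI i) (uI (h k)) * b (uI i) (uI (h' k)))
            = if h k = h' k then 1 else 0 := fun k => col_orth hs hb _ _
        rw [Finset.prod_congr rfl fun k _ => hfac k]
        rcases eq_or_ne h h' with rfl | hne
        · simp
        · obtain ⟨k, hk⟩ := Function.ne_iff.mp hne
          rw [if_neg hne]
          exact Finset.prod_eq_zero (Finset.mem_univ k) (if_neg hk)
    _ = ∑ h : Fin 5 → Fin s, (T fun k => Uv (h k)) ^ 2 := by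
        refine Finset.sum_congr rfl fun h _ => ?_
        rw [Finset.sum_eq_single_of_mem h (Finset.mem_univ _)]
        · rw [if_pos rfl, mul_one, sq]
        · intro h' _ hne
          rw [if_neg (Ne.symm hne), mul_zero]

end Aux7
/-- let `T` be any 5-linear map on `ℝ^{3s}` that vanishes whenever at
least one of its arguments lies in `A_{T,V}`.  Then for any two normalized bases
`B = {U_i,T_i,V_i}` and `B̃ = {Ũ_i,T̃_i,Ṽ_i}` one has
`Σ T(U_{i₁},…,U_{i₅})² = Σ T(Ũ_{i₁},…,Ũ_{i₅})²`. -/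
theorem stmt15 (s : ℕ) (hs : 2 ≤ s)
    (T : MultilinearMap ℝ (fun _ : Fin 5 => Vc s) ℝ)
    (hT : ∀ x : Fin 5 → Vc s, (∃ i, x i ∈ ATVset s) → T x = 0)
    (b btil : Ix s → Vc s)
    (hb : IsNormalizedBasis s b) (hbtil : IsNormalizedBasis s btil) :
    (∑ i₁ : Fin s, ∑ i₂ : Fin s, ∑ i₃ : Fin s, ∑ i₄ : Fin s, ∑ i₅ : Fin s,
      (T ![b (uI i₁), b (uI i₂), b (uI i₃), b (uI i₄), b (uI i₅)]) ^ 2) =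
    ∑ i₁ : Fin s, ∑ i₂ : Fin s, ∑ i₃ : Fin s, ∑ i₄ : Fin s, ∑ i₅ : Fin s,
      (T ![btil (uI i₁), btil (uI i₂), btil (uI i₃), btil (uI i₄), btil (uI i₅)]) ^ 2 := by
  have hview : ∀ (c : Ix s → Vc s) (i₁ i₂ i₃ i₄ i₅ : Fin s),
      ![c (uI i₁), c (uI i₂), c (uI i₃), c (uI i₄), c (uI i₅)]
        = fun k => c (uI (![i₁, i₂, i₃, i₄, i₅] k)) := by
    intro c i₁ i₂ i₃ i₄ i₅
    funext k
    fin_cases k <;> rfl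
  have main : ∀ (c : Ix s → Vc s), IsNormalizedBasis s c →
      (∑ i₁ : Fin s, ∑ i₂ : Fin s, ∑ i₃ : Fin s, ∑ i₄ : Fin s, ∑ i₅ : Fin s,
        (T ![c (uI i₁), c (uI i₂), c (uI i₃), c (uI i₄), c (uI i₅)]) ^ 2)
        = ∑ h : Fin 5 → Fin s, (T fun k => Uv (h k)) ^ 2 := by
    intro c hc
    have h1 : (∑ i₁ : Fin s, ∑ i₂ : Fin s, ∑ i₃ : Fin s, ∑ i₄ : Fin s, ∑ i₅ : Fin s,
        (T ![c (uI i₁), c (uI i₂), c (uI i₃), c (uI i₄), c (uI i₅)]) ^ 2)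
        = ∑ g : Fin 5 → Fin s, (T fun k => c (uI (g k))) ^ 2 := by
      rw [sum_five (fun g => (T fun k => c (uI (g k))) ^ 2)]
      refine Finset.sum_congr rfl fun i₁ _ => Finset.sum_congr rfl fun i₂ _ =>
        Finset.sum_congr rfl fun i₃ _ => Finset.sum_congr rfl fun i₄ _ =>
        Finset.sum_congr rfl fun i₅ _ => ?_
      rw [hview]
    rw [h1]
    exact key_sum hs T hT hc
  rw [main b hb, main btil hbtil]
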